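/- arXiv:2512.10801 — 2 statements merged into one kernel-verified Lean document; each statement's English description precedes it below -/
import Mathlib

section
/- Let $l_u, l_z, l_\theta, n_f \in \mathbb{N}$ be positive. For each $k \ge 0$ let $\Phi_k \in \mathbb{R}^{n_f l_u \times l_\theta}$, $\phi_k \in \mathbb{R}^{l_u \times l_\theta}$, $z_k \in \mathbb{R}^{l_z}$, $U_k \in \mathbb{R}^{n_f l_u}$ be given, let $N \in \mathbb{R}^{l_z \times n_f l_u}$, let $R_u \in \mathbb{R}^{l_u \times l_u}$ be symmetric positive semidefinite, set $\bar{R} = \mathrm{diag}(I_{l_z}, R_u)$, let $P_0 \in \mathbb{R}^{l_\theta \times l_\theta}$ be symmetric positive definite, and let $\theta_0 \in \mathbb{R}^{l_\theta}$. For $k \ge 0$ define the stacked matrix $A_k = [N\Phi_k ; \phi_k] \in \mathbb{R}^{(l_z + l_u) \times l_\theta}$, and define recursively $\Gamma_k = \bar{R} - \bar{R} A_k (P_k^{-1} + A_k^{\mathsf T} \bar{R} A_k)^{-1} A_k^{\mathsf T} \bar{R}$, $P_{k+1} = P_k - P_k A_k^{\mathsf T} \Gamma_k A_k P_k$, and $\theta_{k+1}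 = \theta_k - P_{k+1} A_k^{\mathsf T} \bar{R} \, [\, z_k - N(U_k - \Phi_k \theta_k) \, ; \, \phi_k \theta_k \,]$. Then for every $k \ge 0$: each $P_k$ is symmetric positive definite (so the recursion is well defined), and $\theta_{k+1}$ is the unique global minimizer over $\hat\theta \in \mathbb{R}^{l_\theta}$ of the cumulative cost $J_k(\hat\theta) = \sum_{i=0}^{k} \big[ \hat z_i(\hat\theta)^{\mathsf T} \hat z_i(\hat\theta) + (\phi_i \hat\theta)^{\mathsf T} R_u (\phi_i \hat\theta) \big] + (\hat\theta - \theta_0)^{\mathsf T} P_0^{-1} (\hat\theta - \theta_0)$, where $\hat z_i(\hat\theta) = z_i - N(U_i - \Phi_i \hat\theta)$. -/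
/-!
The cost `J_k` is a quadratic function of `θ̂` whose Hessian is twice the information matrix
`H_k = P₀⁻¹ + ∑_{i ≤ k} A_iᵀ R̄ A_i`, positive definite because `R̄` is positive semidefinite.
The covariance recursion is the matrix inversion lemma in disguise, so `P_k = H_{k-1}⁻¹`.
The parameter update is then a Newton step `θ_{k+1} = θ_k - H_k⁻¹ ∇J_k(θ_k) / 2`: since `θ_k`
minimizes `J_{k-1}`, the gradient of `J_k` at `θ_k` comes from the new data term alone, and a
single Newton step on a positive definite quadratic lands on its unique minimizer.
-/

open Matrix

namespace Matrix

variable {m n K : Type*} [Fintype m] [Fintype n] [CommRing K]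

lemma IsSymm.add_dotProduct_mulVec_add {S : Matrix m m K} (hS : S.IsSymm) (u v : m → K) :
    (u + v) ⬝ᵥ (S *ᵥ (u + v)) = u ⬝ᵥ (S *ᵥ u) + 2 * (v ⬝ᵥ (S *ᵥ u)) + v ⬝ᵥ (S *ᵥ v) := by
  have hcomm : u ⬝ᵥ (S *ᵥ v) = v ⬝ᵥ (S *ᵥ u) := by
    simpa [hS.eq] using (dotProduct_transpose_mulVec S v u).symm
  simp only [mulVec_add, dotProduct_add, add_dotProduct, hcomm]
  ring

variable [DecidableEq n]

lemma inv_add_eq_sub_add (P B : Matrix n n K) (hP : IsUnit P.det) (hM : IsUnit (P⁻¹ + B).det) :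
    (P⁻¹ + B)⁻¹ = P - P * B * P + P * B * (P⁻¹ + B)⁻¹ * B * P := by
  set M := P⁻¹ + B
  have hB : B = M - P⁻¹ := by simp [M]
  have hleft : P * B * M⁻¹ = P - M⁻¹ := by
    rw [hB, mul_sub, sub_mul, mul_nonsing_inv_cancel_right _ _ hM, mul_nonsing_inv _ hP, one_mul]
  have hright : M⁻¹ * B * P = P - M⁻¹ := by
    rw [hB, mul_sub, sub_mul, nonsing_inv_mul _ hM, nonsing_inv_mul_cancel_right _ _ hP, one_mul]
  calc M⁻¹ = P - M⁻¹ * B * P := by rw [hright, sub_sub_cancel]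
    _ = P - (P - P * B * M⁻¹) * B * P := by rw [hleft, sub_sub_cancel]
    _ = P - P * B * P + P * B * M⁻¹ * B * P := by noncomm_ring

lemma sub_mul_transpose_mul_mul_eq_inv_add (P : Matrix n n K) (A : Matrix m n K)
    (R : Matrix m m K) (hP : IsUnit P.det) (hM : IsUnit (P⁻¹ + Aᵀ * R * A).det) :
    P - P * Aᵀ * (R - R * A * (P⁻¹ + Aᵀ * R * A)⁻¹ * Aᵀ * R) * A * P =
      (P⁻¹ + Aᵀ * R * A)⁻¹ := by
  conv_rhs => rw [inv_add_eq_sub_add P _ hP hM]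
  simp only [Matrix.mul_sub, Matrix.sub_mul, Matrix.mul_assoc]
  abel

end Matrix

lemma Matrix.PosDef.unique_min_of_forall_add_eq {n : Type*} [Fintype n] {H : Matrix n n ℝ}
    (hH : H.PosDef) {f : (n → ℝ) → ℝ} {y : n → ℝ} (hf : ∀ h, f (y + h) = f y + h ⬝ᵥ (H *ᵥ h))
    (x : n → ℝ) : f y ≤ f x ∧ (f x = f y → x = y) := by
  have hx := hf (x - y)
  rw [add_sub_cancel] at hx
  refine ⟨?_, fun hxy => ?_⟩
  · simpa [hx] using hH.posSemidef.dotProduct_mulVec_nonneg (x - y)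
  · by_contra hne
    have := hH.dotProduct_mulVec_pos (sub_ne_zero.mpr hne)
    simp only [star_trivial] at this
    linarith

namespace RegularizedLeastSquares

variable {m n : Type*} [Fintype m] [Fintype n] [DecidableEq n]
  (R : Matrix m m ℝ) (A : ℕ → Matrix m n ℝ) (d : ℕ → m → ℝ) (P₀ : Matrix n n ℝ) (θ₀ : n → ℝ)

/-- Uses the first `k` data terms, so the paper's `J_k` is `cost (k + 1)`. -/
noncomputable def cost (k : ℕ) (x : n → ℝ) : ℝ :=
  ∑ i ∈ Finset.range k, (A i *ᵥ x + d i) ⬝ᵥ (R *ᵥ (A i *ᵥ x + d i)) +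
    (x - θ₀) ⬝ᵥ (P₀⁻¹ *ᵥ (x - θ₀))

noncomputable def halfGrad (k : ℕ) (x : n → ℝ) : n → ℝ :=
  ∑ i ∈ Finset.range k, (A i)ᵀ *ᵥ (R *ᵥ (A i *ᵥ x + d i)) + P₀⁻¹ *ᵥ (x - θ₀)

noncomputable def infoMatrix (k : ℕ) : Matrix n n ℝ :=
  ∑ i ∈ Finset.range k, (A i)ᵀ * R * A i + P₀⁻¹

lemma cost_succ (k : ℕ) (x : n → ℝ) :
    cost R A d P₀ θ₀ (k + 1) x =
      cost R A d P₀ θ₀ k x + (A k *ᵥ x + d k) ⬝ᵥ (R *ᵥ (A k *ᵥ x + d k)) := by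
  simp only [cost, Finset.sum_range_succ, add_right_comm]

lemma halfGrad_succ (k : ℕ) (x : n → ℝ) :
    halfGrad R A d P₀ θ₀ (k + 1) x =
      halfGrad R A d P₀ θ₀ k x + (A k)ᵀ *ᵥ (R *ᵥ (A k *ᵥ x + d k)) := by
  simp only [halfGrad, Finset.sum_range_succ, add_right_comm]

lemma infoMatrix_succ (k : ℕ) :
    infoMatrix R A P₀ (k + 1) = infoMatrix R A P₀ k + (A k)ᵀ * R * A k := by
  simp only [infoMatrix, Finset.sum_range_succ, add_right_comm]

lemma halfGrad_add (k : ℕ) (x h : n → ℝ) :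
    halfGrad R A d P₀ θ₀ k (x + h) = halfGrad R A d P₀ θ₀ k x + infoMatrix R A P₀ k *ᵥ h := by
  induction k with
  | zero => simp [halfGrad, infoMatrix, add_sub_right_comm, mulVec_add]
  | succ k ih =>
    rw [halfGrad_succ, halfGrad_succ, infoMatrix_succ, ih]
    simp only [mulVec_add, add_mulVec, mulVec_mulVec, Matrix.mul_assoc]
    abel

lemma cost_add (hR : R.IsSymm) (hP₀ : P₀⁻¹.IsSymm) (k : ℕ) (x h : n → ℝ) :
    cost R A d P₀ θ₀ k (x + h) = cost R A d P₀ θ₀ k x + 2 * (h ⬝ᵥ halfGrad R A d P₀ θ₀ k x) +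
      h ⬝ᵥ (infoMatrix R A P₀ k *ᵥ h) := by
  induction k with
  | zero =>
    simp only [cost, halfGrad, infoMatrix, Finset.sum_range_zero, zero_add]
    rw [add_sub_right_comm, hP₀.add_dotProduct_mulVec_add]
  | succ k ih =>
    have hterm : A k *ᵥ (x + h) + d k = (A k *ᵥ x + d k) + A k *ᵥ h := by
      rw [mulVec_add]; abel
    have hmove w : (A k *ᵥ h) ⬝ᵥ w = h ⬝ᵥ ((A k)ᵀ *ᵥ w) := by
      rw [dotProduct_transpose_mulVec, dotProduct_comm]
    rw [cost_succ, cost_succ, halfGrad_succ, infoMatrix_succ, ih, hterm,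
      hR.add_dotProduct_mulVec_add, hmove, hmove, mulVec_mulVec, mulVec_mulVec, mulVec_mulVec,
      add_mulVec, dotProduct_add, dotProduct_add]
    ring

lemma infoMatrix_posDef (hR : R.PosSemidef) (hP₀ : P₀.PosDef) (k : ℕ) :
    (infoMatrix R A P₀ k).PosDef :=
  .posSemidef_add (posSemidef_sum _ fun i _ => by
    simpa using hR.conjTranspose_mul_mul_same (A i)) hP₀.inv

variable {R A d P₀ θ₀}

lemma eq_inv_infoMatrix (hR : R.PosSemidef) (hP₀ : P₀.PosDef) {P : ℕ → Matrix n n ℝ}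
    (hP0 : P 0 = P₀)
    (hP : ∀ k, P (k + 1) = P k - P k * (A k)ᵀ *
      (R - R * A k * ((P k)⁻¹ + (A k)ᵀ * R * A k)⁻¹ * (A k)ᵀ * R) * A k * P k)
    (k : ℕ) : P k = (infoMatrix R A P₀ k)⁻¹ := by
  have hunit k : IsUnit (infoMatrix R A P₀ k).det :=
    (infoMatrix_posDef R A P₀ hR hP₀ k).det_pos.ne'.isUnit
  induction k with
  | zero => simp [infoMatrix, hP0, nonsing_inv_nonsing_inv _ hP₀.det_pos.ne'.isUnit]
  | succ k ih =>
    have hPinv : (P k)⁻¹ = infoMatrix R A P₀ k := by rw [ih, nonsing_inv_nonsing_inv _ (hunit k)]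
    rw [hP k, sub_mul_transpose_mul_mul_eq_inv_add, hPinv, infoMatrix_succ]
    · rw [ih]; exact isUnit_nonsing_inv_det _ (hunit k)
    · rw [hPinv, ← infoMatrix_succ]; exact hunit (k + 1)

lemma halfGrad_eq_zero {P : ℕ → Matrix n n ℝ} (hP : ∀ k, infoMatrix R A P₀ k * P k = 1)
    {θ : ℕ → n → ℝ} (hθ0 : θ 0 = θ₀)
    (hθ : ∀ k, θ (k + 1) = θ k - P (k + 1) *ᵥ ((A k)ᵀ *ᵥ (R *ᵥ (A k *ᵥ θ k + d k))))
    (k : ℕ) : halfGrad R A d P₀ θ₀ k (θ k) = 0 := by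
  induction k with
  | zero => simp [halfGrad, hθ0]
  | succ k ih =>
    rw [hθ k, sub_eq_add_neg, halfGrad_add, halfGrad_succ, ih, mulVec_neg,
      mulVec_mulVec _ _ (P (k + 1)), hP, one_mulVec, zero_add, add_neg_cancel]

theorem cost_unique_min_of_halfGrad_eq_zero (hR : R.PosSemidef) (hP₀ : P₀.PosDef) {k : ℕ}
    {y : n → ℝ} (hy : halfGrad R A d P₀ θ₀ k y = 0) (x : n → ℝ) :
    cost R A d P₀ θ₀ k y ≤ cost R A d P₀ θ₀ k x ∧
      (cost R A d P₀ θ₀ k x = cost R A d P₀ θ₀ k y → x = y) := by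
  refine (infoMatrix_posDef R A P₀ hR hP₀ k).unique_min_of_forall_add_eq (fun h => ?_) x
  rw [cost_add R A d P₀ θ₀ (isHermitian_iff_isSymm.mp hR.1)
    (isHermitian_iff_isSymm.mp hP₀.inv.1), hy, dotProduct_zero, mul_zero, add_zero]

end RegularizedLeastSquares
theorem rcac_rls_correctness_general (lu lz lθ nf : ℕ)
    (Φ : ℕ → Matrix (Fin (nf * lu)) (Fin lθ) ℝ)
    (φ : ℕ → Matrix (Fin lu) (Fin lθ) ℝ)
    (z : ℕ → Fin lz → ℝ)
    (U : ℕ → Fin (nf * lu) → ℝ)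
    (N : Matrix (Fin lz) (Fin (nf * lu)) ℝ)
    (Ru : Matrix (Fin lu) (Fin lu) ℝ) (hRu : Ru.PosSemidef)
    (Rbar : Matrix (Fin lz ⊕ Fin lu) (Fin lz ⊕ Fin lu) ℝ)
    (hRbar : Rbar = Matrix.fromBlocks 1 0 0 Ru)
    (P0 : Matrix (Fin lθ) (Fin lθ) ℝ) (hP0 : P0.PosDef)
    (θ0 : Fin lθ → ℝ)
    (A : ℕ → Matrix (Fin lz ⊕ Fin lu) (Fin lθ) ℝ)
    (hA : ∀ k, A k = Matrix.fromRows (N * Φ k) (φ k))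
    (P : ℕ → Matrix (Fin lθ) (Fin lθ) ℝ)
    (θ : ℕ → Fin lθ → ℝ)
    (Γ : ℕ → Matrix (Fin lz ⊕ Fin lu) (Fin lz ⊕ Fin lu) ℝ)
    (hPinit : P 0 = P0)
    (hθinit : θ 0 = θ0)
    (hΓ : ∀ k, Γ k =
      Rbar - Rbar * A k * ((P k)⁻¹ + (A k)ᵀ * Rbar * A k)⁻¹ * (A k)ᵀ * Rbar)
    (hPrec : ∀ k, P (k + 1) = P k - P k * (A k)ᵀ * Γ k * A k * P k)
    (hθrec : ∀ k, θ (k + 1) = θ k - P (k + 1) *ᵥ ((A k)ᵀ *ᵥ (Rbar *ᵥ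
      Sum.elim (z k - N *ᵥ (U k - Φ k *ᵥ θ k)) (φ k *ᵥ θ k))))
    (zhat : ℕ → (Fin lθ → ℝ) → Fin lz → ℝ)
    (hzhat : ∀ i θh, zhat i θh = z i - N *ᵥ (U i - Φ i *ᵥ θh))
    (J : ℕ → (Fin lθ → ℝ) → ℝ)
    (hJ : ∀ k θh, J k θh =
      (∑ i ∈ Finset.range (k + 1),
        (zhat i θh ⬝ᵥ zhat i θh + (φ i *ᵥ θh) ⬝ᵥ (Ru *ᵥ (φ i *ᵥ θh))))
      + (θh - θ0) ⬝ᵥ (P0⁻¹ *ᵥ (θh - θ0))) :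
    ∀ k, (P k).PosDef ∧
      ∀ θh, J k (θ (k + 1)) ≤ J k θh ∧ (J k θh = J k (θ (k + 1)) → θh = θ (k + 1)) := by
  set d : ℕ → Fin lz ⊕ Fin lu → ℝ := fun i => Sum.elim (z i - N *ᵥ U i) 0
  have hRbar_psd : Rbar.PosSemidef := by
    rw [hRbar]
    simpa using (@PosDef.fromBlocks₁₁ _ _ ℝ _ _ _ _ _ _ _ 1 0 Ru PosDef.one invertibleOne).mpr
      (by simpa using hRu)
  have hstack i x : Sum.elim (z i - N *ᵥ (U i - Φ i *ᵥ x)) (φ i *ᵥ x) = A i *ᵥ x + d i := by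
    ext (j | j)
    · simp [d, hA, fromRows_mulVec, mulVec_sub, ← mulVec_mulVec]; ring
    · simp [d, hA, fromRows_mulVec]
  have hJ_cost k x : J k x = RegularizedLeastSquares.cost Rbar A d P0 θ0 (k + 1) x := by
    simp only [hJ, RegularizedLeastSquares.cost, hzhat, ← hstack, hRbar, fromBlocks_mulVec,
      sumElim_dotProduct_sumElim]
    simp
  have hinfo := RegularizedLeastSquares.infoMatrix_posDef Rbar A P0 hRbar_psd hP0
  have hP_inv := RegularizedLeastSquares.eq_inv_infoMatrix hRbar_psd hP0 hPinit
    (fun k => by rw [hPrec, hΓ])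
  have hgrad := RegularizedLeastSquares.halfGrad_eq_zero (R := Rbar) (d := d) (P := P) (θ := θ)
    (fun k => by rw [hP_inv, mul_nonsing_inv _ (hinfo k).det_pos.ne'.isUnit]) hθinit
    (fun k => by rw [hθrec, hstack])
  intro k
  refine ⟨hP_inv k ▸ (hinfo k).inv, fun x => ?_⟩
  simpa only [hJ_cost] using
    RegularizedLeastSquares.cost_unique_min_of_halfGrad_eq_zero hRbar_psd hP0 (hgrad (k + 1)) x

/-- Proposition 1 of the paper: correctness of the RCAC / recursive least
squares update.  With `R̄ = diag(I_{l_z}, R_u)` for `R_u` symmetric positive semidefinite,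
`P₀` symmetric positive definite, stacked regressors `A_k = [N Φ_k ; φ_k]`, and the
recursion
`Γ_k = R̄ - R̄ A_k (P_k⁻¹ + A_kᵀ R̄ A_k)⁻¹ A_kᵀ R̄`,
`P_{k+1} = P_k - P_k A_kᵀ Γ_k A_k P_k`,
`θ_{k+1} = θ_k - P_{k+1} A_kᵀ R̄ [z_k - N (U_k - Φ_k θ_k) ; φ_k θ_k]`,
every `P_k` is symmetric positive definite and `θ_{k+1}` is the unique global minimizer
of the cumulative retrospective cost
`J_k(θ̂) = ∑_{i=0}^k [ẑ_i(θ̂)ᵀ ẑ_i(θ̂) + (φ_i θ̂)ᵀ R_u (φ_i θ̂)] + (θ̂ - θ₀)ᵀ P₀⁻¹ (θ̂ - θ₀)`,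
where `ẑ_i(θ̂) = z_i - N (U_i - Φ_i θ̂)`. -/
theorem rcac_rls_correctness (lu lz lθ nf : ℕ)
    (hlu : 0 < lu) (hlz : 0 < lz) (hlθ : 0 < lθ) (hnf : 0 < nf)
    (Φ : ℕ → Matrix (Fin (nf * lu)) (Fin lθ) ℝ)
    (φ : ℕ → Matrix (Fin lu) (Fin lθ) ℝ)
    (z : ℕ → Fin lz → ℝ)
    (U : ℕ → Fin (nf * lu) → ℝ)
    (N : Matrix (Fin lz) (Fin (nf * lu)) ℝ)
    (Ru : Matrix (Fin lu) (Fin lu) ℝ) (hRu : Ru.PosSemidef)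
    (Rbar : Matrix (Fin lz ⊕ Fin lu) (Fin lz ⊕ Fin lu) ℝ)
    (hRbar : Rbar = Matrix.fromBlocks 1 0 0 Ru)
    (P0 : Matrix (Fin lθ) (Fin lθ) ℝ) (hP0 : P0.PosDef)
    (θ0 : Fin lθ → ℝ)
    (A : ℕ → Matrix (Fin lz ⊕ Fin lu) (Fin lθ) ℝ)
    (hA : ∀ k, A k = Matrix.fromRows (N * Φ k) (φ k))
    (P : ℕ → Matrix (Fin lθ) (Fin lθ) ℝ)
    (θ : ℕ → Fin lθ → ℝ)
    (Γ : ℕ → Matrix (Fin lz ⊕ Fin lu) (Fin lz ⊕ Fin lu) ℝ)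
    (hPinit : P 0 = P0)
    (hθinit : θ 0 = θ0)
    (hΓ : ∀ k, Γ k =
      Rbar - Rbar * A k * ((P k)⁻¹ + (A k)ᵀ * Rbar * A k)⁻¹ * (A k)ᵀ * Rbar)
    (hPrec : ∀ k, P (k + 1) = P k - P k * (A k)ᵀ * Γ k * A k * P k)
    (hθrec : ∀ k, θ (k + 1) = θ k - P (k + 1) *ᵥ ((A k)ᵀ *ᵥ (Rbar *ᵥ
      Sum.elim (z k - N *ᵥ (U k - Φ k *ᵥ θ k)) (φ k *ᵥ θ k))))
    (zhat : ℕ → (Fin lθ → ℝ) → Fin lz → ℝ)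
    (hzhat : ∀ i θh, zhat i θh = z i - N *ᵥ (U i - Φ i *ᵥ θh))
    (J : ℕ → (Fin lθ → ℝ) → ℝ)
    (hJ : ∀ k θh, J k θh =
      (∑ i ∈ Finset.range (k + 1),
        (zhat i θh ⬝ᵥ zhat i θh + (φ i *ᵥ θh) ⬝ᵥ (Ru *ᵥ (φ i *ᵥ θh))))
      + (θh - θ0) ⬝ᵥ (P0⁻¹ *ᵥ (θh - θ0))) :
    ∀ k, (P k).PosDef ∧
      ∀ θh, J k (θ (k + 1)) ≤ J k θh ∧ (J k θh = J k (θ (k + 1)) → θh = θ (k + 1)) :=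
  rcac_rls_correctness_general lu lz lθ nf Φ φ z U N Ru hRu Rbar hRbar P0 hP0 θ0 A hA P θ Γ hPinit
    hθinit hΓ hPrec hθrec zhat hzhat J hJ
end

section
/- Let $\bar{R} \in \mathbb{R}^{m \times m}$ be symmetric positive semidefinite, let $P_0 \in \mathbb{R}^{n \times n}$ be symmetric positive definite, and for each $k \ge 0$ let $A_k \in \mathbb{R}^{m \times n}$. Define recursively $\Gamma_k = \bar{R} - \bar{R} A_k (P_k^{-1} + A_k^{\mathsf T} \bar{R} A_k)^{-1} A_k^{\mathsf T} \bar{R}$ and $P_{k+1} = P_k - P_k A_k^{\mathsf T} \Gamma_k A_k P_k$. Then for every $k \ge 0$, $P_k$ is symmetric positive definite; in particular the recursion is well defined for all $k$. -/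
open Matrix

set_option maxHeartbeats 1000000 in
private lemma covariance_step_posDef {m n : ℕ}
    (Rbar : Matrix (Fin m) (Fin m) ℝ) (hRbar : Rbar.PosSemidef)
    (Ak : Matrix (Fin m) (Fin n) ℝ) (Pk : Matrix (Fin n) (Fin n) ℝ) (ih : Pk.PosDef) :
    (Pk - Pk * Akᵀ * (Rbar - Rbar * Ak * (Pk⁻¹ + Akᵀ * Rbar * Ak)⁻¹ * Akᵀ * Rbar) * Ak
      * Pk).PosDef := by
  have hS : (Akᵀ * Rbar * Ak).PosSemidef := by
    have := hRbar.conjTranspose_mul_mul_same Ak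
    rwa [conjTranspose_eq_transpose_of_trivial] at this
  generalize hSdef : Akᵀ * Rbar * Ak = S at hS
  have hQ : (Pk⁻¹ + S).PosDef := ih.inv.add_posSemidef hS
  generalize hQdef : Pk⁻¹ + S = Q at hQ
  have hPinv : Pk * Pk⁻¹ = 1 := mul_nonsing_inv _ ((Matrix.isUnit_iff_isUnit_det _).mp ih.isUnit)
  have hPinv' : Pk⁻¹ * Pk = 1 := nonsing_inv_mul _ ((Matrix.isUnit_iff_isUnit_det _).mp ih.isUnit)
  have hQinv : Q * Q⁻¹ = 1 := mul_nonsing_inv _ ((Matrix.isUnit_iff_isUnit_det _).mp hQ.isUnit)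
  have hQinv' : Q⁻¹ * Q = 1 := nonsing_inv_mul _ ((Matrix.isUnit_iff_isUnit_det _).mp hQ.isUnit)
  have key : Pk - Pk * Akᵀ * (Rbar - Rbar * Ak * Q⁻¹ * Akᵀ * Rbar) * Ak * Pk = Q⁻¹ := by
    have h1 : Pk - Pk * Akᵀ * (Rbar - Rbar * Ak * Q⁻¹ * Akᵀ * Rbar) * Ak * Pk
        = Pk - Pk * S * Pk + Pk * S * Q⁻¹ * S * Pk := by
      rw [← hSdef]
      simp only [Matrix.mul_sub, Matrix.sub_mul, Matrix.mul_assoc]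
      abel
    have h2 : Pk - Pk * S * Pk + Pk * S * Q⁻¹ * S * Pk
        = Pk - Pk * S * Q⁻¹ * ((Q - S) * Pk) := by
      have hq : Q * Pk - S * Pk = (Q - S) * Pk := by noncomm_ring
      calc Pk - Pk * S * Pk + Pk * S * Q⁻¹ * S * Pk
          = Pk - Pk * S * Q⁻¹ * (Q * Pk - S * Pk) := by
            rw [mul_sub, ← mul_assoc, mul_assoc (Pk * S) Q⁻¹ Q, hQinv']
            noncomm_ring
        _ = Pk - Pk * S * Q⁻¹ * ((Q - S) * Pk) := by rw [hq]
    have h3 : (Q - S) * Pk = 1 := by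
      rw [← hQdef]; simpa using hPinv'
    have h4 : Pk * (Q - S) * Q⁻¹ = Pk - Pk * S * Q⁻¹ := by
      rw [Matrix.mul_sub, Matrix.sub_mul, Matrix.mul_assoc Pk Q Q⁻¹, hQinv, mul_one]
    have h5 : Pk * (Q - S) = 1 := by
      rw [← hQdef]; simpa using hPinv
    rw [h1, h2, h3, mul_one, ← h4, h5, one_mul]
  rw [key]
  exact hQ.inv

/-- With `R̄` symmetric positive semidefinite, `P 0` symmetric positive definite,
and matrices `A k`, the covariance recursion
`Γ k = R̄ - R̄ (A k) ((P k)⁻¹ + (A k)ᵀ R̄ (A k))⁻¹ (A k)ᵀ R̄`,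
`P (k+1) = P k - P k (A k)ᵀ (Γ k) (A k) (P k)`
preserves symmetric positive definiteness: every `P k` is symmetric positive definite. -/
theorem covariance_recursion_posDef {m n : ℕ}
    (Rbar : Matrix (Fin m) (Fin m) ℝ) (hRbar : Rbar.PosSemidef)
    (A : ℕ → Matrix (Fin m) (Fin n) ℝ)
    (P : ℕ → Matrix (Fin n) (Fin n) ℝ)
    (Γ : ℕ → Matrix (Fin m) (Fin m) ℝ)
    (hP0 : (P 0).PosDef)
    (hΓ : ∀ k, Γ k =
      Rbar - Rbar * A k * ((P k)⁻¹ + (A k)ᵀ * Rbar * A k)⁻¹ * (A k)ᵀ * Rbar)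
    (hPrec : ∀ k, P (k + 1) = P k - P k * (A k)ᵀ * Γ k * A k * P k) :
    ∀ k, (P k).PosDef := by
  intro k
  induction k with
  | zero => exact hP0
  | succ k ih =>
    rw [hPrec k, hΓ k]
    exact covariance_step_posDef Rbar hRbar (A k) (P k) ih
end
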